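/- Let X_j ~ N(θ_j, σ²) independently for j=1,...,d with at most s nonzero θ_j, each nonzero θ_j ≥ a. Suppose the conditions a/σ ≥ Φ⁻¹(δ) − Φ⁻¹(α'/s) and Φ⁻¹(α'/s) + a/σ ≤ u with u = Φ⁻¹(1 − (α−α')/d) hold, where 0 < α' < α < 1. Define Ŝ = {j : X_j/σ ≥ max(Φ⁻¹(α'/s) + a/σ, Φ⁻¹(δ))} and L_j = max(X_j − uσ, 0) for j ∈ Ŝ, L_j = 0 otherwise. Then P(∃ j : θ_j < L_j or (θ_j ≠ 0 and j ∉ Ŝ)) ≤ α. -/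

import Mathlib

/-!
If the confidence set fails to cover `θ` at a coordinate `j`, then either the lower bound
overshoots, `X_j > θ_j + uσ`, or `θ_j ≠ 0` and `j` is not selected. Since `θ_j ≥ a` and, by the
SNR condition, the selection threshold is `Φ⁻¹(α'/s) + a/σ`, the latter forces
`X_j ≤ θ_j + Φ⁻¹(α'/s) σ`. A union bound over the `d` overshoot events, each of probability
`(α - α')/d`, and the at most `s` miss events, each of probability `α'/s`, gives `α`.
-/

open MeasureTheory ProbabilityTheory Real Set

/-- The standard normal CDF. -/
noncomputable def Phi (y : ℝ) : ℝ := ((gaussianReal 0 1) (Set.Iic y)).toReal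

/-- The standard normal quantile function (inverse CDF). -/
noncomputable def PhiInv : ℝ → ℝ := Function.invFun Phi

open Filter

lemma Phi_eq_cdf : Phi = cdf (gaussianReal 0 1) := funext fun y => (cdf_eq_real _ y).symm

lemma continuous_Phi : Continuous Phi := by
  have hint : Integrable (gaussianPDFReal 0 1) := integrable_gaussianPDFReal 0 1
  have hPhi (y : ℝ) : Phi y = ∫ x in Iic y, gaussianPDFReal 0 1 x := by
    rw [Phi, gaussianReal_apply_eq_integral 0 one_ne_zero, ENNReal.toReal_ofReal]
    exact integral_nonneg fun x => gaussianPDFReal_nonneg 0 1 x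
  have hprim : Phi = fun y => Phi 0 + ∫ x in (0 : ℝ)..y, gaussianPDFReal 0 1 x := by
    funext y
    rw [hPhi, hPhi, ← intervalIntegral.integral_Iic_sub_Iic hint.integrableOn hint.integrableOn]
    ring
  rw [hprim]
  exact continuous_const.add
    (intervalIntegral.continuous_primitive (fun _ _ => hint.intervalIntegrable) 0)

lemma Phi_PhiInv {p : ℝ} (hp0 : 0 < p) (hp1 : p < 1) : Phi (PhiInv p) = p := by
  have hlo : ∃ a, Phi a ≤ p := by
    rw [Phi_eq_cdf]; exact ((tendsto_cdf_atBot _).eventually_le_const hp0).exists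
  have hhi : ∃ b, p ≤ Phi b := by
    rw [Phi_eq_cdf]; exact ((tendsto_cdf_atTop _).eventually_const_le hp1).exists
  exact Function.invFun_eq (mem_range_of_exists_le_of_exists_ge continuous_Phi hlo hhi)

lemma gaussianReal_eq_map_standard (m σ : ℝ) :
    gaussianReal m (σ ^ 2).toNNReal = (gaussianReal 0 1).map (fun x => σ * x + m) := by
  rw [show (fun x => σ * x + m) = (· + m) ∘ (σ * ·) from rfl,
    ← Measure.map_map (measurable_add_const m) (measurable_const_mul σ),
    gaussianReal_map_const_mul, gaussianReal_map_add_const, mul_zero, zero_add, mul_one,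
    Real.toNNReal_of_nonneg (sq_nonneg σ)]

lemma gaussianReal_real_Iic (m z : ℝ) {σ : ℝ} (hσ : 0 < σ) :
    (gaussianReal m (σ ^ 2).toNNReal).real (Iic (m + z * σ)) = Phi z := by
  rw [gaussianReal_eq_map_standard m σ, map_measureReal_apply (by fun_prop) measurableSet_Iic]
  have hpre : (fun x => σ * x + m) ⁻¹' Iic (m + z * σ) = Iic z := by
    ext x
    simp only [mem_preimage, mem_Iic]
    rw [add_comm, add_le_add_iff_left, mul_comm, mul_le_mul_iff_left₀ hσ]
  rw [hpre]
  rfl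

lemma gaussianReal_real_Ioi (m z : ℝ) {σ : ℝ} (hσ : 0 < σ) :
    (gaussianReal m (σ ^ 2).toNNReal).real (Ioi (m + z * σ)) = 1 - Phi z := by
  rw [← compl_Iic, probReal_compl_eq_one_sub measurableSet_Iic, gaussianReal_real_Iic m z hσ]

section LawGaussian

variable {Ω : Type*} [MeasurableSpace Ω] {μ : Measure Ω} {X : Ω → ℝ} {m σ : ℝ}

lemma measureReal_le_of_map_eq_gaussianReal
    (hX : μ.map X = gaussianReal m (σ ^ 2).toNNReal) (hσ : 0 < σ) (z : ℝ) :
    μ.real {ω | X ω ≤ m + z * σ} = Phi z := by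
  have hXm : AEMeasurable X μ := .of_map_ne_zero (by rw [hX]; exact IsProbabilityMeasure.ne_zero _)
  rw [← gaussianReal_real_Iic m z hσ, ← hX,
    map_measureReal_apply_of_aemeasurable hXm measurableSet_Iic]
  rfl

lemma measureReal_gt_of_map_eq_gaussianReal
    (hX : μ.map X = gaussianReal m (σ ^ 2).toNNReal) (hσ : 0 < σ) (z : ℝ) :
    μ.real {ω | m + z * σ < X ω} = 1 - Phi z := by
  have hXm : AEMeasurable X μ := .of_map_ne_zero (by rw [hX]; exact IsProbabilityMeasure.ne_zero _)
  rw [← gaussianReal_real_Ioi m z hσ, ← hX,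
    map_measureReal_apply_of_aemeasurable hXm measurableSet_Ioi]
  rfl

end LawGaussian

lemma natCast_mul_div_le {n m : ℕ} (hnm : n ≤ m) {x : ℝ} (hx : 0 ≤ x) :
    (n : ℝ) * (x / m) ≤ x := by
  rcases Nat.eq_zero_or_pos m with rfl | hm
  · simp [Nat.le_zero.1 hnm, hx]
  · calc (n : ℝ) * (x / m) ≤ m * (x / m) := by gcongr
      _ = x := mul_div_cancel₀ x (by positivity)

lemma tail_event_of_not_covered {θ x σ a q t u : ℝ} (hσ : 0 < σ) (ha : 0 < a)
    (hsig : θ ≠ 0 → a ≤ θ) (ht : t ≤ q + a / σ)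
    (h : θ < (if max (q + a / σ) t ≤ x / σ then max (x - u * σ) 0 else 0)
      ∨ (θ ≠ 0 ∧ ¬ max (q + a / σ) t ≤ x / σ)) :
    θ + u * σ < x ∨ (θ ≠ 0 ∧ x ≤ θ + q * σ) := by
  have hθ : 0 ≤ θ := by
    by_cases hθ0 : θ = 0
    · exact hθ0.ge
    · exact ha.le.trans (hsig hθ0)
  rw [max_eq_left ht] at h
  rcases h with hL | ⟨hθ0, hx⟩
  · left
    split_ifs at hL
    · rcases lt_max_iff.1 hL with h | h <;> linarith
    · linarith
  · right
    have hx' : x < q * σ + a := by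
      simpa [add_mul, div_mul_cancel₀ a hσ.ne'] using (div_lt_iff₀ hσ).1 (not_le.1 hx)
    exact ⟨hθ0, by linarith [hsig hθ0]⟩

theorem sparse_ci_coverage_general {Ω : Type*} [MeasurableSpace Ω] (μ : Measure Ω)
    [IsProbabilityMeasure μ] (d s : ℕ)
    (σ a δ α α' : ℝ) (hσ : 0 < σ) (ha : 0 < a)
    (hα'0 : 0 < α') (hα'α : α' < α) (hα1 : α < 1)
    (θ : Fin d → ℝ) (X : Fin d → Ω → ℝ)
    (hlaw : ∀ j, μ.map (X j) = gaussianReal (θ j) (σ ^ 2).toNNReal)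
    (hsupp : (Finset.univ.filter (fun j => θ j ≠ 0)).card ≤ s)
    (hsig : ∀ j, θ j ≠ 0 → a ≤ θ j)
    (hsnr : PhiInv δ - PhiInv (α' / s) ≤ a / σ) :
    (μ {ω | ∃ j,
        θ j < (if max (PhiInv (α' / s) + a / σ) (PhiInv δ) ≤ X j ω / σ then
            max (X j ω - PhiInv (1 - (α - α') / d) * σ) 0 else 0)
        ∨ (θ j ≠ 0 ∧
            ¬ max (PhiInv (α' / s) + a / σ) (PhiInv δ) ≤ X j ω / σ)}).toReal ≤ α := by
  set u := PhiInv (1 - (α - α') / d)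
  set q := PhiInv (α' / s)
  set S := Finset.univ.filter (fun j => θ j ≠ 0)
  have hα : 0 < α - α' := sub_pos.2 hα'α
  have hexceed (j : Fin d) : μ.real {ω | θ j + u * σ < X j ω} = (α - α') / d := by
    have hd : (1 : ℝ) ≤ d := by exact_mod_cast j.pos
    rw [measureReal_gt_of_map_eq_gaussianReal (hlaw j) hσ, Phi_PhiInv, sub_sub_cancel]
    · linarith [div_le_self hα.le hd]
    · linarith [div_pos hα (zero_lt_one.trans_le hd)]
  have hmiss (j : Fin d) (hj : j ∈ S) : μ.real {ω | X j ω ≤ θ j + q * σ} = α' / s := by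
    have hs : (1 : ℝ) ≤ s := by exact_mod_cast (Finset.card_pos.2 ⟨j, hj⟩).trans_le hsupp
    rw [measureReal_le_of_map_eq_gaussianReal (hlaw j) hσ, Phi_PhiInv (by positivity)]
    linarith [div_le_self hα'0.le hs]
  calc μ.real _
      ≤ μ.real ((⋃ j, {ω | θ j + u * σ < X j ω}) ∪ ⋃ j ∈ S, {ω | X j ω ≤ θ j + q * σ}) := by
        refine measureReal_mono fun ω ⟨j, hj⟩ => ?_
        rcases tail_event_of_not_covered hσ ha (hsig j) (by linarith) hj with h | ⟨hθ, h⟩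
        · exact Or.inl (mem_iUnion.2 ⟨j, h⟩)
        · exact Or.inr (mem_iUnion₂.2 ⟨j, by simpa [S] using hθ, h⟩)
    _ ≤ ∑ j, μ.real {ω | θ j + u * σ < X j ω} + ∑ j ∈ S, μ.real {ω | X j ω ≤ θ j + q * σ} :=
        (measureReal_union_le _ _).trans
          (add_le_add (measureReal_iUnion_fintype_le _) (measureReal_biUnion_finset_le _ _))
    _ = d * ((α - α') / d) + S.card * (α' / s) := by
        rw [Finset.sum_congr rfl hmiss]
        simp [hexceed]
    _ ≤ (α - α') + α' :=
        add_le_add (natCast_mul_div_le le_rfl hα.le) (natCast_mul_div_le hsupp hα'0.le)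
    _ = α := by ring

/-- Coverage of the one-sided sparse confidence set in the low-SNR regime: with
`X_j ~ N(θ_j, σ²)` independent, at most `s` nonzero `θ_j`, each nonzero `θ_j ≥ a`,
`a/σ ≥ Φ⁻¹(δ) − Φ⁻¹(α'/s)` and `Φ⁻¹(α'/s) + a/σ ≤ u` where
`u = Φ⁻¹(1 − (α−α')/d)`, the sparse confidence set with
`Ŝ = {j : X_j/σ ≥ max(Φ⁻¹(α'/s) + a/σ, Φ⁻¹(δ))}` and lower bounds
`L_j = max(X_j − uσ, 0)` on `Ŝ` (and `0` off `Ŝ`) fails to cover `θ` with probability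
at most `α`. -/
theorem sparse_ci_coverage {Ω : Type*} [MeasurableSpace Ω] (μ : Measure Ω)
    [IsProbabilityMeasure μ] (d s : ℕ) (hd : 1 ≤ d) (hs : 1 ≤ s)
    (σ a δ α α' : ℝ) (hσ : 0 < σ) (ha : 0 < a)
    (hδ0 : 0 < δ) (hδ1 : δ < 1) (hα'0 : 0 < α') (hα'α : α' < α) (hα1 : α < 1)
    (θ : Fin d → ℝ) (X : Fin d → Ω → ℝ)
    (hmeas : ∀ j, Measurable (X j))
    (hlaw : ∀ j, μ.map (X j) = gaussianReal (θ j) (σ ^ 2).toNNReal)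
    (hind : iIndepFun X μ)
    (hsupp : (Finset.univ.filter (fun j => θ j ≠ 0)).card ≤ s)
    (hsig : ∀ j, θ j ≠ 0 → a ≤ θ j)
    (hsnr : PhiInv δ - PhiInv (α' / s) ≤ a / σ)
    (hlow : PhiInv (α' / s) + a / σ ≤ PhiInv (1 - (α - α') / d)) :
    (μ {ω | ∃ j,
        θ j < (if max (PhiInv (α' / s) + a / σ) (PhiInv δ) ≤ X j ω / σ then
            max (X j ω - PhiInv (1 - (α - α') / d) * σ) 0 else 0)
        ∨ (θ j ≠ 0 ∧
            ¬ max (PhiInv (α' / s) + a / σ) (PhiInv δ) ≤ X j ω / σ)}).toReal ≤ α :=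
  sparse_ci_coverage_general μ d s σ a δ α α' hσ ha hα'0 hα'α hα1 θ X hlaw hsupp hsig hsnr
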